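/- arXiv:1601.07603 — 7 statements merged into one kernel-verified Lean document; each statement's English description precedes it below -/
import Mathlib

section
/- Discrete generalized Liouville identity (Theorem 3.3). Let γ₀, γ₁ : X → ℝ be strictly positive, let s = √(γ₁/γ₀) ∈ ℝ^X (componentwise), and let q̃ = −(L(γ₀)·s)/s ∈ ℝ^X (componentwise quotient). Then the geometric-mean weighted Laplacians satisfy the matrix identity L(γ₁) = diag(s) · (L(γ₀) + diag(q̃)) · diag(s). -/
/-!
Write `L(γ) = diag(W 1) - W` with the weight matrix `W(γ) e f = √(γ e γ f)` on adjacent pairs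
(irreflexivity makes its diagonal vanish). The weights transform by conjugation,
`W(γ₁) = diag(s) W(γ₀) diag(s)`, and from there the identity holds for any matrix `W` and any
nowhere-vanishing `s`: the potential `q̃ = -(L s)/s` trades the degree diagonal `diag(W 1)` for
`diag((W s)/s)`, which conjugation by `diag(s)` turns into `diag(s · W s)`, the row sums of
`diag(s) W diag(s)`.
-/

open Matrix BigOperators

/-- The geometric-mean weighted Laplacian on the line graph: for a strictly positive
conductivity `γ : X → ℝ`, the matrix with off-diagonal entries `-√(γ e · γ f)` for
adjacent `e, f`, zero for distinct non-adjacent pairs, and diagonal entries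
`∑_{f adjacent to e} √(γ e · γ f)`. -/
noncomputable def lineLap {X : Type*} [Fintype X] [DecidableEq X]
    (A : X → X → Prop) [DecidableRel A] (γ : X → ℝ) : Matrix X X ℝ :=
  Matrix.of fun e f =>
    if e = f then ∑ g ∈ Finset.univ.filter (fun g => A e g), Real.sqrt (γ e * γ g)
    else if A e f then -Real.sqrt (γ e * γ f) else 0

section WeightedLaplacian

variable {X K : Type*} [Fintype X] [DecidableEq X] [Field K]

def weightedLaplacian (W : Matrix X X K) : Matrix X X K :=
  diagonal (W *ᵥ 1) - W

theorem diagonal_mul_mul_diagonal_mulVec_one (s : X → K) (W : Matrix X X K) :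
    (diagonal s * W * diagonal s) *ᵥ 1 = s * (W *ᵥ s) := by
  have hdiag_one : diagonal s *ᵥ 1 = s := funext fun e => by simp [mulVec_diagonal]
  rw [← mulVec_mulVec, ← mulVec_mulVec, hdiag_one]
  exact funext (mulVec_diagonal _ _)

theorem weightedLaplacian_add_diagonal_neg_mulVec_div (W : Matrix X X K) {s : X → K}
    (hs : ∀ e, s e ≠ 0) :
    weightedLaplacian W + diagonal (-(weightedLaplacian W *ᵥ s) / s) =
      diagonal ((W *ᵥ s) / s) - W := by
  have hdiag : diagonal (-(weightedLaplacian W *ᵥ s) / s) =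
      diagonal ((W *ᵥ s) / s) - diagonal (W *ᵥ 1) := by
    rw [diagonal_sub]
    congr 1
    ext e
    simp only [weightedLaplacian, sub_mulVec, mulVec_diagonal, Pi.div_apply, Pi.neg_apply,
      Pi.sub_apply]
    field_simp [hs e]
    ring
  rw [hdiag, weightedLaplacian]
  abel

theorem weightedLaplacian_diagonal_mul_mul_diagonal (W : Matrix X X K) {s : X → K}
    (hs : ∀ e, s e ≠ 0) :
    weightedLaplacian (diagonal s * W * diagonal s) =
      diagonal s * (weightedLaplacian W + diagonal (-(weightedLaplacian W *ᵥ s) / s)) *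
        diagonal s := by
  have hcancel :
      diagonal s * diagonal ((W *ᵥ s) / s) * diagonal s = diagonal (s * (W *ᵥ s)) := by
    rw [diagonal_mul_diagonal, diagonal_mul_diagonal]
    congr 1
    ext e
    simp only [Pi.mul_apply, Pi.div_apply]
    field_simp [hs e]
  rw [weightedLaplacian_add_diagonal_neg_mulVec_div W hs, mul_sub, sub_mul, hcancel,
    weightedLaplacian, diagonal_mul_mul_diagonal_mulVec_one]

end WeightedLaplacian

theorem sqrt_div_mul_sqrt_mul_mul_sqrt_div {a b c d : ℝ} (ha : 0 < a) (hb : 0 < b) (hc : 0 ≤ c) :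
    √(c / a) * √(a * b) * √(d / b) = √(c * d) := by
  rw [← Real.sqrt_mul (by positivity), ← Real.sqrt_mul (by positivity)]
  congr 1
  field_simp

section LineGraph

variable {X : Type*} [Fintype X] [DecidableEq X] (A : X → X → Prop) [DecidableRel A]

noncomputable def geomMeanWeight (γ : X → ℝ) : Matrix X X ℝ :=
  of fun e f => if A e f then √(γ e * γ f) else 0

variable {A}

theorem lineLap_eq_weightedLaplacian (hirr : ∀ e, ¬ A e e) (γ : X → ℝ) :
    lineLap A γ = weightedLaplacian (geomMeanWeight A γ) := by
  ext e f
  by_cases hef : e = f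
  · subst hef
    simp [lineLap, weightedLaplacian, geomMeanWeight, mulVec, dotProduct, hirr, Finset.sum_filter]
  · simp only [lineLap, weightedLaplacian, geomMeanWeight, of_apply, Matrix.sub_apply,
      diagonal_apply_ne _ hef, if_neg hef, zero_sub]
    split_ifs <;> simp

theorem geomMeanWeight_eq_diagonal_mul_mul_diagonal {γ₀ γ₁ : X → ℝ} (h₀ : ∀ e, 0 < γ₀ e)
    (h₁ : ∀ e, 0 ≤ γ₁ e) :
    geomMeanWeight A γ₁ =
      diagonal (fun e => √(γ₁ e / γ₀ e)) * geomMeanWeight A γ₀ *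
        diagonal (fun e => √(γ₁ e / γ₀ e)) := by
  ext e f
  rw [mul_diagonal, diagonal_mul]
  by_cases hA : A e f
  · simp only [geomMeanWeight, of_apply, if_pos hA]
    exact (sqrt_div_mul_sqrt_mul_mul_sqrt_div (h₀ e) (h₀ f) (h₁ e)).symm
  · simp [geomMeanWeight, hA]

end LineGraph

theorem discrete_generalized_liouville_general
    {X : Type*} [Fintype X] [DecidableEq X]
    (A : X → X → Prop) [DecidableRel A]
    (hirr : ∀ e, ¬ A e e)
    (γ₀ γ₁ : X → ℝ) (h₀ : ∀ e, 0 < γ₀ e) (h₁ : ∀ e, 0 < γ₁ e)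
    (s qt : X → ℝ)
    (hs : ∀ e, s e = Real.sqrt (γ₁ e / γ₀ e))
    (hq : ∀ e, qt e = -((lineLap A γ₀).mulVec s e) / s e) :
    lineLap A γ₁ =
      Matrix.diagonal s * (lineLap A γ₀ + Matrix.diagonal qt) * Matrix.diagonal s := by
  have hs_ne : ∀ e, s e ≠ 0 := fun e => by
    rw [hs]; exact (Real.sqrt_pos.mpr (div_pos (h₁ e) (h₀ e))).ne'
  obtain rfl : s = fun e => √(γ₁ e / γ₀ e) := funext hs
  obtain rfl : qt = -(lineLap A γ₀ *ᵥ _) / _ := funext hq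
  rw [lineLap_eq_weightedLaplacian hirr, lineLap_eq_weightedLaplacian hirr,
    geomMeanWeight_eq_diagonal_mul_mul_diagonal h₀ fun e => (h₁ e).le]
  exact weightedLaplacian_diagonal_mul_mul_diagonal _ hs_ne

/-- Discrete generalized Liouville identity (Theorem 3.3):
`L(γ₁) = diag(s) (L(γ₀) + diag(qt)) diag(s)` with `s = √(γ₁/γ₀)` and
`qt = −(L(γ₀) s)/s` componentwise. -/
theorem discrete_generalized_liouville
    {X : Type*} [Fintype X] [DecidableEq X]
    (A : X → X → Prop) [DecidableRel A]
    (hsymm : ∀ e f, A e f → A f e) (hirr : ∀ e, ¬ A e e)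
    (γ₀ γ₁ : X → ℝ) (h₀ : ∀ e, 0 < γ₀ e) (h₁ : ∀ e, 0 < γ₁ e)
    (s qt : X → ℝ)
    (hs : ∀ e, s e = Real.sqrt (γ₁ e / γ₀ e))
    (hq : ∀ e, qt e = -((lineLap A γ₀).mulVec s e) / s e) :
    lineLap A γ₁ =
      Matrix.diagonal s * (lineLap A γ₀ + Matrix.diagonal qt) * Matrix.diagonal s :=
  discrete_generalized_liouville_general A hirr γ₀ γ₁ h₀ h₁ s qt hs hq
end

section
/- Positive definiteness of the interior block (core of Lemma 3.1). Assume the subgraph of G induced by the interior node set I is connected, that some interior node i ∈ I is adjacent in G to some boundary node j ∈ B, and that q(i) ≥ 0 for all i ∈ V. Then the interior block (L_{γ,q})_{II} is a symmetric positive definite matrix. -/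
open Matrix BigOperators

/-- The discrete Schrödinger operator `L_{γ,q}` acting on `u : V → ℝ` by
`(L_{γ,q} u)(i) = ∑_j γ(i,j)(u(i) − u(j)) + q(i) u(i)`. -/
noncomputable def Lop {V : Type*} [Fintype V] (γ : V → V → ℝ) (q : V → ℝ)
    (u : V → ℝ) : V → ℝ :=
  fun i => (∑ j, γ i j * (u i - u j)) + q i * u i

/-- The matrix of the discrete Schrödinger operator `L_{γ,q}`. -/
noncomputable def Lmat {V : Type*} [Fintype V] [DecidableEq V]
    (γ : V → V → ℝ) (q : V → ℝ) : Matrix V V ℝ :=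
  Matrix.of fun i j => Lop γ q (Pi.single j 1) i

/-!
Extending `x : I → ℝ` by zero to `u : V → ℝ` turns the quadratic form of the interior block at `x`
into that of `L_{γ,q}` at `u`, and for symmetric `γ`
`u ⬝ᵥ L u = ½ ∑_{i,j} γ(i,j) (u i - u j)² + ∑_i q(i) u(i)² ≥ 0`.
If this vanishes, `u` takes equal values at the ends of every edge of `G`, so it is constant on the
connected interior; an interior–boundary edge makes that constant equal to a boundary value of `u`,
which is `0`.
-/

namespace Matrix

variable {m n R : Type*} [Fintype m] [Fintype n] [CommSemiring R]

theorem extend_dotProduct {e : m → n} (he : Function.Injective e) (x : m → R) (y : n → R) :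
    Function.extend e x 0 ⬝ᵥ y = x ⬝ᵥ (y ∘ e) :=
  (Fintype.sum_of_injective e he _ _
    (fun j hj => by simp [Function.extend_apply' _ _ _ fun ⟨i, hi⟩ => hj ⟨i, hi⟩])
    (fun i => by simp [he.extend_apply])).symm

theorem dotProduct_submatrix_mulVec (A : Matrix n n R) {e : m → n} (he : Function.Injective e)
    (x : m → R) :
    x ⬝ᵥ (A.submatrix e e *ᵥ x) = Function.extend e x 0 ⬝ᵥ (A *ᵥ Function.extend e x 0) := by
  rw [extend_dotProduct he]
  congr 1
  ext i
  simp only [Function.comp_apply, mulVec, dotProduct_comm (A (e i)), extend_dotProduct he]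
  exact dotProduct_comm _ _

end Matrix

namespace SimpleGraph

variable {V α : Type*} {G : SimpleGraph V}

theorem Reachable.apply_eq_of_forall_adj {f : V → α} (hf : ∀ a b, G.Adj a b → f a = f b)
    {u v : V} (h : G.Reachable u v) : f u = f v := by
  obtain ⟨w⟩ := h
  induction w with
  | nil => rfl
  | cons hadj _ ih => exact (hf _ _ hadj).trans ih

theorem Connected.apply_eq_of_induce {s : Set V} (hconn : (G.induce s).Connected) {f : V → α}
    (hf : ∀ a b, G.Adj a b → f a = f b) {a b : V} (ha : a ∈ s) (hb : b ∈ s) : f a = f b :=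
  (hconn.preconnected ⟨a, ha⟩ ⟨b, hb⟩).apply_eq_of_forall_adj (f := f ∘ Subtype.val)
    fun _ _ h => hf _ _ h

end SimpleGraph

section SchrodingerOperator

variable {V : Type*} [Fintype V] {γ : V → V → ℝ} (q : V → ℝ)

theorem Lmat_apply [DecidableEq V] (i j : V) :
    Lmat γ q i j = (if i = j then (∑ k, γ i k) + q i else 0) - γ i j := by
  simp only [Lmat, Lop, of_apply, Pi.single_apply, mul_sub, Finset.sum_sub_distrib, mul_ite,
    mul_one, mul_zero, Finset.sum_ite_eq', Finset.mem_univ, if_true]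
  split_ifs with h
  · subst h; ring
  · simp

theorem Lmat_mulVec [DecidableEq V] (u : V → ℝ) : Lmat γ q *ᵥ u = Lop γ q u := by
  ext i
  simp only [mulVec, dotProduct, Lmat_apply, sub_mul, ite_mul, zero_mul, Finset.sum_sub_distrib,
    Finset.sum_ite_eq, Finset.mem_univ, if_true, Lop, mul_sub, add_mul, Finset.sum_mul]
  ring

theorem Lmat_isSymm [DecidableEq V] (hsymm : ∀ i j, γ i j = γ j i) : (Lmat γ q).IsSymm := by
  ext i j
  rw [transpose_apply, Lmat_apply, Lmat_apply, hsymm]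
  by_cases h : i = j
  · subst h; rfl
  · simp [h, Ne.symm h]

theorem dotProduct_Lop (hsymm : ∀ i j, γ i j = γ j i) (u : V → ℝ) :
    u ⬝ᵥ Lop γ q u = (∑ i, ∑ j, γ i j * (u i - u j) ^ 2) / 2 + ∑ i, q i * u i ^ 2 := by
  have hswap : ∑ i, ∑ j, γ i j * (u j * (u j - u i)) = ∑ i, ∑ j, γ i j * (u i * (u i - u j)) := by
    rw [Finset.sum_comm]
    exact Fintype.sum_congr _ _ fun i => Fintype.sum_congr _ _ fun j => by rw [hsymm]
  have hsq : ∑ i, ∑ j, γ i j * (u i - u j) ^ 2 = 2 * ∑ i, ∑ j, γ i j * (u i * (u i - u j)) := by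
    calc ∑ i, ∑ j, γ i j * (u i - u j) ^ 2
        = ∑ i, ∑ j, (γ i j * (u i * (u i - u j)) + γ i j * (u j * (u j - u i))) :=
          Fintype.sum_congr _ _ fun i => Fintype.sum_congr _ _ fun j => by ring
      _ = 2 * ∑ i, ∑ j, γ i j * (u i * (u i - u j)) := by
          simp only [Finset.sum_add_distrib, hswap]; ring
  rw [hsq, mul_div_cancel_left₀ _ two_ne_zero]
  simp only [dotProduct, Lop, mul_add, Finset.mul_sum, Finset.sum_add_distrib]
  congr 1
  · exact Fintype.sum_congr _ _ fun i => Fintype.sum_congr _ _ fun j => by ring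
  · exact Fintype.sum_congr _ _ fun i => by ring

theorem eq_of_adj_of_sum_mul_sub_sq_eq_zero {G : SimpleGraph V} (hγ : ∀ i j, 0 ≤ γ i j)
    (hpos : ∀ i j, G.Adj i j → 0 < γ i j) {u : V → ℝ}
    (h : ∑ i, ∑ j, γ i j * (u i - u j) ^ 2 = 0) {i j : V} (hij : G.Adj i j) : u i = u j := by
  have hnonneg : ∀ i j, 0 ≤ γ i j * (u i - u j) ^ 2 := fun i j => mul_nonneg (hγ i j) (sq_nonneg _)
  have hrow := (Fintype.sum_eq_zero_iff_of_nonneg fun i => Finset.sum_nonneg fun j _ =>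
    hnonneg i j).1 h
  have hterm := congrFun ((Fintype.sum_eq_zero_iff_of_nonneg (hnonneg i)).1 (congrFun hrow i)) j
  have hsq := (mul_eq_zero.1 hterm).resolve_left (hpos i j hij).ne'
  exact sub_eq_zero.1 (pow_eq_zero_iff two_ne_zero |>.1 hsq)

theorem dotProduct_Lop_pos {G : SimpleGraph V} (hsymm : ∀ i j, γ i j = γ j i)
    (hγ : ∀ i j, 0 ≤ γ i j) (hpos : ∀ i j, G.Adj i j → 0 < γ i j) (hq : ∀ i, 0 ≤ q i)
    {s : Set V} (hconn : (G.induce s).Connected)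
    (hadj : ∃ i ∈ s, ∃ j ∉ s, G.Adj i j) {u : V → ℝ} (hu : ∀ j ∉ s, u j = 0) (hne : u ≠ 0) :
    0 < u ⬝ᵥ Lop γ q u := by
  have hE : 0 ≤ ∑ i, ∑ j, γ i j * (u i - u j) ^ 2 :=
    Finset.sum_nonneg fun i _ => Finset.sum_nonneg fun j _ => mul_nonneg (hγ i j) (sq_nonneg _)
  have hQ : 0 ≤ ∑ i, q i * u i ^ 2 :=
    Finset.sum_nonneg fun i _ => mul_nonneg (hq i) (sq_nonneg _)
  rw [dotProduct_Lop q hsymm]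
  refine (add_nonneg (div_nonneg hE zero_le_two) hQ).lt_of_ne fun h => hne ?_
  have hedge : ∀ i j, G.Adj i j → u i = u j := fun i j =>
    eq_of_adj_of_sum_mul_sub_sq_eq_zero hγ hpos (by linarith)
  obtain ⟨i₀, hi₀, j₀, hj₀, h₀⟩ := hadj
  funext i
  by_cases hi : i ∈ s
  · rw [hconn.apply_eq_of_induce hedge hi hi₀, hedge _ _ h₀, hu j₀ hj₀, Pi.zero_apply]
  · exact hu i hi

end SchrodingerOperator

theorem interior_block_posdef_general
    {V : Type*} [Fintype V] [DecidableEq V]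
    (G : SimpleGraph V)
    (γ : V → V → ℝ) (hsymm : ∀ i j, γ i j = γ j i)
    (hpos : ∀ i j, G.Adj i j → 0 < γ i j)
    (hzero : ∀ i j, ¬ G.Adj i j → γ i j = 0)
    (q : V → ℝ) (hq : ∀ i, 0 ≤ q i)
    (B : Finset V)
    (hconn : (G.induce ((Bᶜ : Finset V) : Set V)).Connected)
    (hadj : ∃ i ∈ (Bᶜ : Finset V), ∃ j ∈ B, G.Adj i j) :
    ((Lmat γ q).submatrix (fun i : ↥(Bᶜ) => (i : V))
        (fun j : ↥(Bᶜ) => (j : V))).IsSymm ∧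
    ((Lmat γ q).submatrix (fun i : ↥(Bᶜ) => (i : V))
        (fun j : ↥(Bᶜ) => (j : V))).PosDef := by
  have hγ : ∀ i j, 0 ≤ γ i j := fun i j =>
    (em (G.Adj i j)).elim (fun h => (hpos i j h).le) (fun h => (hzero i j h).ge)
  have hsymmI := (Lmat_isSymm q hsymm).submatrix (Subtype.val : ↥(Bᶜ) → V)
  refine ⟨hsymmI, posDef_iff_dotProduct_mulVec.2 ⟨isHermitian_iff_isSymm.2 hsymmI, fun x hx => ?_⟩⟩
  rw [star_trivial, dotProduct_submatrix_mulVec _ Subtype.val_injective, Lmat_mulVec]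
  refine dotProduct_Lop_pos q hsymm hγ hpos hq hconn (by simpa using hadj)
    (fun j hj => Function.extend_apply' _ _ _ fun ⟨i, hi⟩ => hj (hi ▸ i.2)) fun h => hx ?_
  simpa [h, eq_comm] using Function.extend_comp Subtype.val_injective x 0

/-- Positive definiteness of the interior block (core of Lemma 3.1): if the subgraph
of `G` induced by the interior `I = Bᶜ` is connected, some interior node is adjacent
to some boundary node, and `q ≥ 0`, then `(L_{γ,q})_{II}` is symmetric positive
definite. -/
theorem interior_block_posdef
    {V : Type*} [Fintype V] [DecidableEq V]
    (G : SimpleGraph V) [DecidableRel G.Adj]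
    (γ : V → V → ℝ) (hsymm : ∀ i j, γ i j = γ j i)
    (hpos : ∀ i j, G.Adj i j → 0 < γ i j)
    (hzero : ∀ i j, ¬ G.Adj i j → γ i j = 0)
    (q : V → ℝ) (hq : ∀ i, 0 ≤ q i)
    (B : Finset V) (hB : B.Nonempty) (hI : (Bᶜ : Finset V).Nonempty)
    (hconn : (G.induce ((Bᶜ : Finset V) : Set V)).Connected)
    (hadj : ∃ i ∈ (Bᶜ : Finset V), ∃ j ∈ B, G.Adj i j) :
    ((Lmat γ q).submatrix (fun i : ↥(Bᶜ) => (i : V))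
        (fun j : ↥(Bᶜ) => (j : V))).IsSymm ∧
    ((Lmat γ q).submatrix (fun i : ↥(Bᶜ) => (i : V))
        (fun j : ↥(Bᶜ) => (j : V))).PosDef :=
  interior_block_posdef_general G γ hsymm hpos hzero q hq B hconn hadj
end

section
/- Unique solvability of the discrete Dirichlet problem (Lemma 3.1). Assume the subgraph of G induced by the interior node set I is connected, that some interior node is adjacent in G to some boundary node, and that q(i) ≥ 0 for all i ∈ V. Then for every boundary data f : B → ℝ there exists a unique u : V → ℝ such that u(j) = f(j) for all j ∈ B and (L_{γ,q} u)(i) = 0 for all i ∈ I. -/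
open Matrix BigOperators

lemma Lop_key {V : Type*} [Fintype V] [DecidableEq V]
    (G : SimpleGraph V) [DecidableRel G.Adj]
    (γ : V → V → ℝ) (hsymm : ∀ i j, γ i j = γ j i)
    (hpos : ∀ i j, G.Adj i j → 0 < γ i j)
    (hzero : ∀ i j, ¬ G.Adj i j → γ i j = 0)
    (q : V → ℝ) (hq : ∀ i, 0 ≤ q i)
    (B : Finset V)
    (hconn : (G.induce ((Bᶜ : Finset V) : Set V)).Connected)
    (hadj : ∃ i ∈ (Bᶜ : Finset V), ∃ j ∈ B, G.Adj i j)
    (u : V → ℝ) (hu0 : ∀ j ∈ B, u j = 0)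
    (hL : ∀ i ∈ (Bᶜ : Finset V), Lop γ q u i = 0) : u = 0 := by
  have hγnn : ∀ i j, 0 ≤ γ i j := by
    intro i j
    by_cases h : G.Adj i j
    · exact (hpos i j h).le
    · exact (hzero i j h).ge
  have hE : ∑ i, u i * Lop γ q u i = 0 := by
    apply Finset.sum_eq_zero
    intro i _
    by_cases hi : i ∈ B
    · rw [hu0 i hi]; ring
    · rw [hL i (Finset.mem_compl.mpr hi)]; ring
  set S := ∑ i, ∑ j, γ i j * (u i * (u i - u j)) with hS
  have hsplit : ∑ i, u i * Lop γ q u i = S + ∑ i, q i * u i ^ 2 := by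
    rw [hS, ← Finset.sum_add_distrib]
    apply Finset.sum_congr rfl
    intro i _
    simp only [Lop]
    rw [mul_add, Finset.mul_sum]
    congr 1
    · apply Finset.sum_congr rfl; intro j _; ring
    · ring
  have hswap : S = ∑ i, ∑ j, γ i j * (u j * (u j - u i)) := by
    rw [hS, Finset.sum_comm]
    apply Finset.sum_congr rfl; intro i _
    apply Finset.sum_congr rfl; intro j _
    rw [hsymm i j]
  have h2S : 2 * S = ∑ i, ∑ j, γ i j * (u i - u j) ^ 2 := by
    rw [two_mul]
    nth_rewrite 2 [hswap]
    rw [← Finset.sum_add_distrib]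
    apply Finset.sum_congr rfl; intro i _
    rw [← Finset.sum_add_distrib]
    apply Finset.sum_congr rfl; intro j _
    ring
  have hPnn : ∀ i ∈ (Finset.univ : Finset V), 0 ≤ ∑ j, γ i j * (u i - u j) ^ 2 := by
    intro i _
    exact Finset.sum_nonneg fun j _ => mul_nonneg (hγnn i j) (sq_nonneg _)
  have hQnn : 0 ≤ ∑ i, q i * u i ^ 2 :=
    Finset.sum_nonneg fun i _ => mul_nonneg (hq i) (sq_nonneg _)
  have hP0 : ∑ i, ∑ j, γ i j * (u i - u j) ^ 2 = 0 := by
    have h1 : S + ∑ i, q i * u i ^ 2 = 0 := by rw [← hsplit]; exact hE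
    have h2 : 2 * S + 2 * ∑ i, q i * u i ^ 2 = 0 := by linarith
    have hPnn' : 0 ≤ ∑ i, ∑ j, γ i j * (u i - u j) ^ 2 :=
      Finset.sum_nonneg hPnn
    nlinarith [h2S]
  have hterm : ∀ i j, γ i j * (u i - u j) ^ 2 = 0 := by
    intro i j
    have h1 := (Finset.sum_eq_zero_iff_of_nonneg hPnn).mp hP0 i (Finset.mem_univ i)
    have h2 := (Finset.sum_eq_zero_iff_of_nonneg
      (fun j _ => mul_nonneg (hγnn i j) (sq_nonneg _))).mp h1 j (Finset.mem_univ j)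
    exact h2
  have hadj' : ∀ i j, G.Adj i j → u i = u j := by
    intro i j h
    have := hterm i j
    have hγ := hpos i j h
    have : (u i - u j) ^ 2 = 0 := by
      rcases mul_eq_zero.mp this with h' | h'
      · exact absurd h' (ne_of_gt hγ)
      · exact h'
    have := pow_eq_zero_iff (n := 2) (by norm_num) |>.mp this
    linarith [sub_eq_zero.mp this]
  -- u is constant along walks in induced graph
  have hwalk : ∀ (a b : ((Bᶜ : Finset V) : Set V)),
      (G.induce ((Bᶜ : Finset V) : Set V)).Reachable a b → u a = u b := by
    intro a b r
    obtain ⟨w⟩ := r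
    induction w with
    | nil => rfl
    | cons h p ih =>
      exact (hadj' _ _ h).trans ih
  obtain ⟨i0, hi0, j0, hj0, hij⟩ := hadj
  have hui0 : u i0 = 0 := by rw [hadj' i0 j0 hij]; exact hu0 j0 hj0
  funext i
  by_cases hi : i ∈ B
  · exact hu0 i hi
  · have hi' : i ∈ (Bᶜ : Finset V) := Finset.mem_compl.mpr hi
    have r := hconn.preconnected ⟨i, by simpa using hi'⟩ ⟨i0, by simpa using hi0⟩
    have := hwalk _ _ r
    simp only at this
    simp [this, hui0]

/-- Unique solvability of the discrete Dirichlet problem (Lemma 3.1): if the subgraph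
induced on the interior `I = Bᶜ` is connected, some interior node is adjacent to some
boundary node, and `q ≥ 0`, then for every boundary data `f` there is a unique
`u : V → ℝ` with `u = f` on `B` and `(L_{γ,q} u)(i) = 0` for all interior `i`. -/
theorem discrete_dirichlet_unique_solvability
    {V : Type*} [Fintype V] [DecidableEq V]
    (G : SimpleGraph V) [DecidableRel G.Adj]
    (γ : V → V → ℝ) (hsymm : ∀ i j, γ i j = γ j i)
    (hpos : ∀ i j, G.Adj i j → 0 < γ i j)
    (hzero : ∀ i j, ¬ G.Adj i j → γ i j = 0)
    (q : V → ℝ) (hq : ∀ i, 0 ≤ q i)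
    (B : Finset V) (hB : B.Nonempty) (hI : (Bᶜ : Finset V).Nonempty)
    (hconn : (G.induce ((Bᶜ : Finset V) : Set V)).Connected)
    (hadj : ∃ i ∈ (Bᶜ : Finset V), ∃ j ∈ B, G.Adj i j)
    (f : ↥B → ℝ) :
    ∃! u : V → ℝ, (∀ j : ↥B, u j.1 = f j) ∧ (∀ i ∈ (Bᶜ : Finset V), Lop γ q u i = 0) := by
  classical
  -- the linear map
  let T : (V → ℝ) →ₗ[ℝ] (V → ℝ) :=
    { toFun := fun u i => if i ∈ B then u i else Lop γ q u i
      map_add' := by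
        intro u v
        funext i
        by_cases hi : i ∈ B
        · simp [Lop, hi]
        · simp only [Lop, hi, if_false, Pi.add_apply]
          have h1 : ∀ j, γ i j * ((u i + v i) - (u j + v j))
              = γ i j * (u i - u j) + γ i j * (v i - v j) := fun j => by ring
          rw [Finset.sum_congr rfl fun j _ => h1 j, Finset.sum_add_distrib]
          ring
      map_smul' := by
        intro c u
        funext i
        by_cases hi : i ∈ B
        · simp [Lop, hi]
        · simp only [Lop, hi, if_false, Pi.smul_apply, smul_eq_mul, RingHom.id_apply]
          have h1 : ∀ j, γ i j * (c * u i - c * u j) = c * (γ i j * (u i - u j)) :=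
            fun j => by ring
          rw [Finset.sum_congr rfl fun j _ => h1 j, ← Finset.mul_sum]
          ring }
  have hinj : Function.Injective T := by
    rw [← LinearMap.ker_eq_bot, LinearMap.ker_eq_bot']
    intro u hu
    apply Lop_key G γ hsymm hpos hzero q hq B hconn hadj u
    · intro j hj
      have := congrFun hu j
      simpa [T, hj] using this
    · intro i hi
      have hi' : i ∉ B := Finset.mem_compl.mp hi
      have := congrFun hu i
      simpa [T, hi'] using this
  have hsurj : Function.Surjective T := LinearMap.injective_iff_surjective.mp hinj
  obtain ⟨u, hu⟩ := hsurj (fun i => if h : i ∈ B then f ⟨i, h⟩ else 0)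
  refine ⟨u, ⟨?_, ?_⟩, ?_⟩
  · intro j
    have := congrFun hu j.1
    simpa [T, j.2] using this
  · intro i hi
    have hi' : i ∉ B := Finset.mem_compl.mp hi
    have := congrFun hu i
    simpa [T, hi'] using this
  · intro v ⟨hv1, hv2⟩
    have hu1 : ∀ j : ↥B, u j.1 = f j := by
      intro j
      have := congrFun hu j.1
      simpa [T, j.2] using this
    have hu2 : ∀ i ∈ (Bᶜ : Finset V), Lop γ q u i = 0 := by
      intro i hi
      have hi' : i ∉ B := Finset.mem_compl.mp hi
      have := congrFun hu i
      simpa [T, hi'] using this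
    have hsub : v - u = 0 := by
      apply Lop_key G γ hsymm hpos hzero q hq B hconn hadj
      · intro j hj
        simp [hv1 ⟨j, hj⟩, hu1 ⟨j, hj⟩]
      · intro i hi
        have hLsub : Lop γ q (v - u) i = Lop γ q v i - Lop γ q u i := by
          simp only [Lop, Pi.sub_apply]
          have h1 : ∀ j, γ i j * ((v i - u i) - (v j - u j))
              = γ i j * (v i - v j) - γ i j * (u i - u j) := fun j => by ring
          rw [Finset.sum_congr rfl fun j _ => h1 j, Finset.sum_sub_distrib]
          ring
        rw [hLsub, hv2 i hi, hu2 i hi, sub_zero]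
    exact sub_eq_zero.mp hsub
end

section
/- Symmetry and conservation of currents for the network DtN map. Assume q = 0 and that the interior block (L_{γ,0})_{II} is invertible, and define the discrete Dirichlet-to-Neumann matrix Λ_{γ,0} = L_{BB} − L_{BI} L_{II}^{-1} L_{IB}. Then Λ_{γ,0} is a symmetric matrix and Λ_{γ,0} · 𝟙_B = 0, where 𝟙_B ∈ ℝ^B is the all-ones vector (i.e. the rows of Λ_{γ,0} sum to zero). -/
open Matrix BigOperators

lemma Lmat_entry {V : Type*} [Fintype V] [DecidableEq V] (γ : V → V → ℝ) (i j : V) :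
    Lmat γ (0 : V → ℝ) i j = (if i = j then ∑ k, γ i k else 0) - γ i j := by
  by_cases h : i = j
  · subst h
    simp [Lmat, Lop, mul_sub, Finset.sum_sub_distrib, Pi.single_apply, mul_ite]
  · simp [Lmat, Lop, h, mul_sub, Finset.sum_sub_distrib, Pi.single_apply, mul_ite,
      Ne.symm h]

lemma Lmat_symm {V : Type*} [Fintype V] [DecidableEq V] (γ : V → V → ℝ)
    (hsymm : ∀ i j, γ i j = γ j i) : (Lmat γ (0 : V → ℝ)).IsSymm := by
  ext i j
  simp only [Matrix.transpose_apply, Lmat_entry]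
  by_cases h : i = j
  · subst h; rfl
  · simp [h, Ne.symm h, hsymm i j]

lemma Lmat_rowsum {V : Type*} [Fintype V] [DecidableEq V] (γ : V → V → ℝ) (i : V) :
    ∑ j, Lmat γ (0 : V → ℝ) i j = 0 := by
  simp [Lmat_entry, Finset.sum_sub_distrib]

/-- Symmetry and conservation of currents for the network DtN map: with `q = 0`, the
Schur complement `Λ_{γ,0} = L_BB − L_BI L_II⁻¹ L_IB` is symmetric and its rows sum to
zero (`Λ_{γ,0} 𝟙 = 0`). -/
theorem dtn_symmetric_and_conserves_current
    {V : Type*} [Fintype V] [DecidableEq V]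
    (G : SimpleGraph V) [DecidableRel G.Adj]
    (γ : V → V → ℝ) (hsymm : ∀ i j, γ i j = γ j i)
    (hpos : ∀ i j, G.Adj i j → 0 < γ i j)
    (hzero : ∀ i j, ¬ G.Adj i j → γ i j = 0)
    (B : Finset V) (hB : B.Nonempty) (hI : (Bᶜ : Finset V).Nonempty)
    (LBB : Matrix ↥B ↥B ℝ) (LBI : Matrix ↥B ↥(Bᶜ) ℝ)
    (LIB : Matrix ↥(Bᶜ) ↥B ℝ) (LII : Matrix ↥(Bᶜ) ↥(Bᶜ) ℝ)
    (hLBB : LBB = (Lmat γ (0 : V → ℝ)).submatrix (fun i : ↥B => (i : V)) (fun j : ↥B => (j : V)))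
    (hLBI : LBI = (Lmat γ (0 : V → ℝ)).submatrix (fun i : ↥B => (i : V)) (fun j : ↥(Bᶜ) => (j : V)))
    (hLIB : LIB = (Lmat γ (0 : V → ℝ)).submatrix (fun i : ↥(Bᶜ) => (i : V)) (fun j : ↥B => (j : V)))
    (hLII : LII = (Lmat γ (0 : V → ℝ)).submatrix (fun i : ↥(Bᶜ) => (i : V)) (fun j : ↥(Bᶜ) => (j : V)))
    (hinv : IsUnit LII.det) :
    (LBB - LBI * LII⁻¹ * LIB).IsSymm ∧
    (LBB - LBI * LII⁻¹ * LIB).mulVec (fun _ => (1 : ℝ)) = 0 := by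
  have hL : (Lmat γ (0 : V → ℝ)).IsSymm := Lmat_symm γ hsymm
  have hBBs : LBBᵀ = LBB := by
    rw [hLBB, Matrix.transpose_submatrix, hL.eq]
  have hIIs : LIIᵀ = LII := by
    rw [hLII, Matrix.transpose_submatrix, hL.eq]
  have hBIs : LBIᵀ = LIB := by
    rw [hLBI, hLIB, Matrix.transpose_submatrix, hL.eq]
  have hIBs : LIBᵀ = LBI := by
    rw [hLIB, hLBI, Matrix.transpose_submatrix, hL.eq]
  constructor
  · show _ᵀ = _
    rw [Matrix.transpose_sub, hBBs, Matrix.transpose_mul, Matrix.transpose_mul,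
      Matrix.transpose_nonsing_inv, hIIs, hBIs, hIBs, Matrix.mul_assoc]
  · -- row sums
    have h1 : LBB.mulVec (fun _ => (1:ℝ)) + LBI.mulVec (fun _ => (1:ℝ)) = 0 := by
      funext i
      simp only [Pi.add_apply, Matrix.mulVec, dotProduct, mul_one, hLBB, hLBI,
        Matrix.submatrix_apply, Pi.zero_apply]
      rw [Finset.sum_coe_sort B (fun j => Lmat γ (0 : V → ℝ) i j),
        Finset.sum_coe_sort Bᶜ (fun j => Lmat γ (0 : V → ℝ) i j),
        Finset.sum_add_sum_compl]
      exact Lmat_rowsum γ i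
    have h2 : LIB.mulVec (fun _ => (1:ℝ)) + LII.mulVec (fun _ => (1:ℝ)) = 0 := by
      funext i
      simp only [Pi.add_apply, Matrix.mulVec, dotProduct, mul_one, hLIB, hLII,
        Matrix.submatrix_apply, Pi.zero_apply]
      rw [Finset.sum_coe_sort B (fun j => Lmat γ (0 : V → ℝ) i j),
        Finset.sum_coe_sort Bᶜ (fun j => Lmat γ (0 : V → ℝ) i j),
        Finset.sum_add_sum_compl]
      exact Lmat_rowsum γ i
    have hIB1 : LIB.mulVec (fun _ => (1:ℝ)) = LII.mulVec (-fun _ => (1:ℝ)) := by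
      rw [Matrix.mulVec_neg]
      linear_combination (norm := module) h2
    have hkey : LII⁻¹.mulVec (LIB.mulVec (fun _ => (1:ℝ))) = -fun _ => (1:ℝ) := by
      rw [hIB1, Matrix.mulVec_mulVec, Matrix.nonsing_inv_mul _ hinv, Matrix.one_mulVec]
    rw [Matrix.sub_mulVec, Matrix.mul_assoc, ← Matrix.mulVec_mulVec,
      ← Matrix.mulVec_mulVec, hkey, Matrix.mulVec_neg]
    linear_combination (norm := module) h1
end

section
/- Fréchet derivative of the discrete Schrödinger potential map (corrected formula from the proof of Proposition 5.1; the paper's stated formula omits the factor 1/2, which does not affect its null-space conclusions). Fix a strictly positive γ₀ : X → ℝ and let F : ℝ^X → ℝ^X be the map γ ↦ q̃(γ; γ₀). Then at every strictly positive γ : X → ℝ, F is differentiable and its derivative is the linear map δ ↦ −(1/2)·[ √(γ₀/γ) ⊙ ( L(γ₀) · (δ/√(γ⊙γ₀)) ) + (δ/γ) ⊙ q̃(γ; γ₀) ], where ⊙, /, √ are componentwise. -/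
open Matrix BigOperators

/-- The discrete Schrödinger potential `q̃(γ₁; γ₀) = −(L(γ₀)·s)/s` with
`s = √(γ₁/γ₀)` componentwise, given by the discrete Liouville identity. -/
noncomputable def qtil {X : Type*} [Fintype X] [DecidableEq X]
    (A : X → X → Prop) [DecidableRel A] (γ₀ γ₁ : X → ℝ) : X → ℝ :=
  fun e => -((lineLap A γ₀).mulVec (fun x => Real.sqrt (γ₁ x / γ₀ x)) e)
      / Real.sqrt (γ₁ e / γ₀ e)

/-!
With `s = √(γ/γ₀)`, the potential is the quotient `q̃ = -(L(γ₀) s) / s`, so its derivative follows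
from the quotient rule once the derivative of `s` is known: `s'(δ) = δ / (2√(γ γ₀))`. Since
`s'(δ)/s = δ/(2γ)` and `1/s = √(γ₀/γ)`, the two terms of the quotient rule become the two terms
of the stated formula.
-/

theorem Real.sqrt_div_mul_self {a b : ℝ} (hb : 0 < b) : √(a / b) * b = √(a * b) := by
  have h := Real.sqrt_mul' (a / b) (mul_self_nonneg b)
  rw [Real.sqrt_mul_self hb.le, show a / b * (b * b) = a * b by field_simp] at h
  exact h.symm

open ContinuousLinearMap

theorem hasFDerivAt_sqrt_apply_div {X : Type*} [Fintype X] {γ₀ γ : X → ℝ} {x : X}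
    (hγ₀ : 0 < γ₀ x) (hγ : 0 < γ x) :
    HasFDerivAt (fun g : X → ℝ => √(g x / γ₀ x))
      ((2 * √(γ x * γ₀ x))⁻¹ • proj (R := ℝ) (φ := fun _ : X => ℝ) x) γ := by
  have h := ((hasFDerivAt_apply (𝕜 := ℝ) x γ).mul_const (γ₀ x)⁻¹).sqrt (div_pos hγ hγ₀).ne'
  have hc : 1 / (2 * √(γ x * (γ₀ x)⁻¹)) * (γ₀ x)⁻¹ = (2 * √(γ x * γ₀ x))⁻¹ := by
    rw [← div_eq_mul_inv, ← Real.sqrt_div_mul_self hγ₀]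
    field_simp
  rwa [smul_smul, hc] at h

theorem hasFDerivAt_sqrt_div {X : Type*} [Fintype X] {γ₀ γ : X → ℝ}
    (hγ₀ : ∀ x, 0 < γ₀ x) (hγ : ∀ x, 0 < γ x) :
    HasFDerivAt (fun g x => √(g x / γ₀ x))
      (ContinuousLinearMap.pi fun x =>
        (2 * √(γ x * γ₀ x))⁻¹ • proj (R := ℝ) (φ := fun _ : X => ℝ) x) γ :=
  hasFDerivAt_pi.2 fun x => hasFDerivAt_sqrt_apply_div (hγ₀ x) (hγ x)

theorem hasFDerivAt_neg_mulVec_apply_div {E X : Type*} [NormedAddCommGroup E] [NormedSpace ℝ E]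
    [Fintype X] (M : Matrix X X ℝ) {s : E → X → ℝ} {s' : E →L[ℝ] X → ℝ} {γ : E}
    (hs : HasFDerivAt s s' γ) {e : X} (he : s γ e ≠ 0) :
    ∃ D : E →L[ℝ] ℝ, HasFDerivAt (fun g => -(M *ᵥ s g) e / s g e) D γ ∧
      ∀ δ, D δ = -((M *ᵥ s' δ) e + (-(M *ᵥ s γ) e / s γ e) * s' δ e) / s γ e := by
  set Φ : (X → ℝ) →L[ℝ] ℝ := (proj e).comp M.mulVecLin.toContinuousLinearMap
  have hnum : HasFDerivAt (fun g => -(M *ᵥ s g) e) (-(Φ.comp s')) γ :=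
    (Φ.hasFDerivAt.comp γ hs).neg
  have hden : HasFDerivAt (fun g => (s g e)⁻¹) ((-(s γ e ^ 2)⁻¹) • (proj e).comp s') γ :=
    (hasDerivAt_inv he).comp_hasFDerivAt γ (hasFDerivAt_pi'.1 hs e)
  refine ⟨_, by simpa only [div_eq_mul_inv] using hnum.fun_mul hden, fun δ => ?_⟩
  simp only [neg_smul, smul_neg, _root_.add_apply, _root_.neg_apply, _root_.smul_apply,
    ContinuousLinearMap.comp_apply, proj_apply, smul_eq_mul, neg_mul, mul_neg, neg_neg,
    LinearMap.coe_toContinuousLinearMap', mulVecBilin_apply, neg_add_rev, Φ]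
  field_simp

theorem hasFDerivAt_neg_mulVec_div {E X : Type*} [NormedAddCommGroup E] [NormedSpace ℝ E]
    [Fintype X] (M : Matrix X X ℝ) {s : E → X → ℝ} {s' : E →L[ℝ] X → ℝ} {γ : E}
    (hs : HasFDerivAt s s' γ) (hsγ : ∀ e, s γ e ≠ 0) :
    ∃ L : E →L[ℝ] X → ℝ, HasFDerivAt (fun g e => -(M *ᵥ s g) e / s g e) L γ ∧
      ∀ δ e, L δ e = -((M *ᵥ s' δ) e + (-(M *ᵥ s γ) e / s γ e) * s' δ e) / s γ e := by
  choose D hD hDδ using fun e => hasFDerivAt_neg_mulVec_apply_div M hs (hsγ e)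
  exact ⟨ContinuousLinearMap.pi D, hasFDerivAt_pi.2 hD, fun δ e => hDδ e δ⟩

theorem qtil_frechet_derivative_general
    {X : Type*} [Fintype X] [DecidableEq X]
    (A : X → X → Prop) [DecidableRel A]
    (γ₀ : X → ℝ) (h₀ : ∀ e, 0 < γ₀ e) :
    ∀ γ : X → ℝ, (∀ e, 0 < γ e) →
      ∃ L : (X → ℝ) →L[ℝ] (X → ℝ),
        HasFDerivAt (fun g : X → ℝ => qtil A γ₀ g) L γ ∧
        ∀ δ : X → ℝ, ∀ e : X,
          L δ e = -(1/2) *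
            (Real.sqrt (γ₀ e / γ e) *
                ((lineLap A γ₀).mulVec (fun x => δ x / Real.sqrt (γ x * γ₀ x)) e)
              + (δ e / γ e) * qtil A γ₀ γ e) := by
  intro γ hγ
  obtain ⟨L, hL, hLδ⟩ := hasFDerivAt_neg_mulVec_div (lineLap A γ₀) (hasFDerivAt_sqrt_div h₀ hγ)
    fun e => (Real.sqrt_pos.2 (div_pos (hγ e) (h₀ e))).ne'
  refine ⟨L, hL, fun δ e => ?_⟩
  have hs' : (ContinuousLinearMap.pi fun x =>
      (2 * √(γ x * γ₀ x))⁻¹ • proj (R := ℝ) (φ := fun _ : X => ℝ) x) δ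
      = (2 : ℝ)⁻¹ • fun x => δ x / √(γ x * γ₀ x) := by
    ext x
    simp only [coe_pi', _root_.smul_apply, proj_apply, smul_eq_mul, Pi.smul_apply]
    ring
  rw [hLδ, hs', mulVec_smul]
  simp only [Pi.smul_apply, smul_eq_mul, qtil]
  have hpos : 0 < √(γ e / γ₀ e) := Real.sqrt_pos.2 (div_pos (hγ e) (h₀ e))
  have hsq : γ e = √(γ e / γ₀ e) ^ 2 * γ₀ e := by
    rw [Real.sq_sqrt (div_pos (hγ e) (h₀ e)).le]
    field_simp [(h₀ e).ne']
  have hinv : √(γ₀ e / γ e) = (√(γ e / γ₀ e))⁻¹ := by rw [← Real.sqrt_inv, inv_div]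
  rw [hinv, ← Real.sqrt_div_mul_self (h₀ e)]
  generalize √(γ e / γ₀ e) = s at *
  rw [hsq]
  field_simp

/-- Fréchet derivative of the discrete Schrödinger potential map: at every strictly
positive `γ`, the map `F : γ ↦ q̃(γ; γ₀)` is differentiable with derivative
`δ ↦ −(1/2) [ √(γ₀/γ) ⊙ (L(γ₀)·(δ/√(γ⊙γ₀))) + (δ/γ) ⊙ q̃(γ; γ₀) ]`. -/
theorem qtil_frechet_derivative
    {X : Type*} [Fintype X] [DecidableEq X]
    (A : X → X → Prop) [DecidableRel A]
    (hsymm : ∀ e f, A e f → A f e) (hirr : ∀ e, ¬ A e e)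
    (γ₀ : X → ℝ) (h₀ : ∀ e, 0 < γ₀ e) :
    ∀ γ : X → ℝ, (∀ e, 0 < γ e) →
      ∃ L : (X → ℝ) →L[ℝ] (X → ℝ),
        HasFDerivAt (fun g : X → ℝ => qtil A γ₀ g) L γ ∧
        ∀ δ : X → ℝ, ∀ e : X,
          L δ e = -(1/2) *
            (Real.sqrt (γ₀ e / γ e) *
                ((lineLap A γ₀).mulVec (fun x => δ x / Real.sqrt (γ x * γ₀ x)) e)
              + (δ e / γ e) * qtil A γ₀ γ e) :=
  qtil_frechet_derivative_general A γ₀ h₀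
end

section
/- The vector γ/γ₀ is a left null vector of the derivative of the discrete Schrödinger potential map (from the proof of Proposition 5.1). Let γ₀, γ : X → ℝ be strictly positive. Then for every δ ∈ ℝ^X, ∑_{e∈X} (γ(e)/γ₀(e)) · [ √(γ₀/γ) ⊙ ( L(γ₀) · (δ/√(γ⊙γ₀)) ) + (δ/γ) ⊙ q̃(γ; γ₀) ](e) = 0, where ⊙, /, √ are componentwise; that is, the vector γ/γ₀ annihilates the image of the derivative of γ ↦ q̃(γ; γ₀) from the left. -/
/-! With `s = √(γ/γ₀)` and `u = δ/√(γγ₀)`, the `e`-th summand simplifies to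
`s e * (L u) e - u e * (L s) e`, where `L = L(γ₀)`. Summing gives `s ⬝ᵥ L u - u ⬝ᵥ L s`,
which vanishes because `L` is symmetric. -/

open Matrix BigOperators

theorem Matrix.IsSymm.dotProduct_mulVec_comm {n R : Type*} [Fintype n] [CommSemiring R]
    {M : Matrix n n R} (hM : M.IsSymm) (u v : n → R) :
    u ⬝ᵥ M *ᵥ v = v ⬝ᵥ M *ᵥ u := by
  rw [dotProduct_mulVec, ← mulVec_transpose, hM.eq, dotProduct_comm]

theorem lineLap_isSymm {X : Type*} [Fintype X] [DecidableEq X]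
    {A : X → X → Prop} [DecidableRel A] (hsymm : ∀ e f, A e f → A f e) (γ : X → ℝ) :
    (lineLap A γ).IsSymm := by
  refine IsSymm.ext fun e f => ?_
  by_cases hef : e = f
  · rw [hef]
  · have hA : A f e ↔ A e f := ⟨hsymm f e, hsymm e f⟩
    simp only [lineLap, of_apply, if_neg hef, if_neg (Ne.symm hef), hA, mul_comm (γ f)]

theorem div_mul_sqrt_div_add_div_mul_neg_div_sqrt_div {a b : ℝ} (ha : 0 < a) (hb : 0 < b)
    (x y d : ℝ) :
    a / b * (√(b / a) * x + d / a * (-y / √(a / b))) = √(a / b) * x - d / √(a * b) * y := by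
  obtain ⟨r, hr, rfl⟩ : ∃ r, 0 < r ∧ a = r ^ 2 :=
    ⟨√a, Real.sqrt_pos.2 ha, (Real.sq_sqrt ha.le).symm⟩
  obtain ⟨t, ht, rfl⟩ : ∃ t, 0 < t ∧ b = t ^ 2 :=
    ⟨√b, Real.sqrt_pos.2 hb, (Real.sq_sqrt hb.le).symm⟩
  rw [← div_pow, ← div_pow, ← mul_pow, Real.sqrt_sq (by positivity),
    Real.sqrt_sq (by positivity), Real.sqrt_sq (by positivity)]
  field_simp
  ring

theorem qtil_left_null_vector_general
    {X : Type*} [Fintype X] [DecidableEq X]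
    (A : X → X → Prop) [DecidableRel A]
    (hsymm : ∀ e f, A e f → A f e)
    (γ₀ γ : X → ℝ) (h₀ : ∀ e, 0 < γ₀ e) (hγ : ∀ e, 0 < γ e) :
    ∀ δ : X → ℝ,
      ∑ e, (γ e / γ₀ e) *
        (Real.sqrt (γ₀ e / γ e) *
            ((lineLap A γ₀).mulVec (fun x => δ x / Real.sqrt (γ x * γ₀ x)) e)
          + (δ e / γ e) * qtil A γ₀ γ e) = 0 := by
  intro δ
  set L := lineLap A γ₀
  set s : X → ℝ := fun x => √(γ x / γ₀ x)
  set u : X → ℝ := fun x => δ x / √(γ x * γ₀ x)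
  calc _ = ∑ e, (s e * (L *ᵥ u) e - u e * (L *ᵥ s) e) :=
        Finset.sum_congr rfl fun e _ =>
          div_mul_sqrt_div_add_div_mul_neg_div_sqrt_div (hγ e) (h₀ e) _ _ _
    _ = s ⬝ᵥ L *ᵥ u - u ⬝ᵥ L *ᵥ s := Finset.sum_sub_distrib _ _
    _ = 0 := by rw [(lineLap_isSymm hsymm γ₀).dotProduct_mulVec_comm, sub_self]

/-- The vector `γ/γ₀` is a left null vector of the derivative of the discrete
Schrödinger potential map: for every `δ`,
`∑ₑ (γ(e)/γ₀(e)) [ √(γ₀/γ) ⊙ (L(γ₀)·(δ/√(γ⊙γ₀))) + (δ/γ) ⊙ q̃(γ; γ₀) ](e) = 0`. -/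
theorem qtil_left_null_vector
    {X : Type*} [Fintype X] [DecidableEq X]
    (A : X → X → Prop) [DecidableRel A]
    (hsymm : ∀ e f, A e f → A f e) (hirr : ∀ e, ¬ A e e)
    (γ₀ γ : X → ℝ) (h₀ : ∀ e, 0 < γ₀ e) (hγ : ∀ e, 0 < γ e) :
    ∀ δ : X → ℝ,
      ∑ e, (γ e / γ₀ e) *
        (Real.sqrt (γ₀ e / γ e) *
            ((lineLap A γ₀).mulVec (fun x => δ x / Real.sqrt (γ x * γ₀ x)) e)
          + (δ e / γ e) * qtil A γ₀ γ e) = 0 :=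
  qtil_left_null_vector_general A hsymm γ₀ γ h₀ hγ
end

section
/- Continuum generalized Liouville identity (equations (eq:glv)–(eq:glv:q), written with sᵢ = σᵢ^{1/2}). Let Ω be an open subset of EuclideanSpace ℝ (Fin 2), let s₀, s₁, v : EuclideanSpace ℝ (Fin 2) → ℝ be twice continuously differentiable on Ω with s₀(x) > 0 and s₁(x) > 0 for all x ∈ Ω, and set σ₀ = s₀², σ₁ = s₁² and ρ = s₁/s₀ (so ρ = (σ₁/σ₀)^{1/2}). Then for every x ∈ Ω, (1/ρ(x)) · ( −div( σ₁ · ∇(v/ρ) )(x) ) = −div( σ₀ · ∇v )(x) + q(x) · v(x), where q = div(σ₀ · ∇ρ)/ρ; i.e. the operators L_{σ₁,0} and L_{σ₀,q} are Liouville congruent via the factor (σ₁/σ₀)^{-1/2}. -/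
open BigOperators

/-- The divergence of a vector field `F` on `EuclideanSpace ℝ (Fin 2)`:
`div F (x) = ∑ᵢ ⟨fderiv ℝ F x (eᵢ), eᵢ⟩` with `(eᵢ)` the standard orthonormal basis. -/
noncomputable def diverg (F : EuclideanSpace ℝ (Fin 2) → EuclideanSpace ℝ (Fin 2))
    (x : EuclideanSpace ℝ (Fin 2)) : ℝ :=
  ∑ i, fderiv ℝ F x (EuclideanSpace.single i (1 : ℝ)) i

/-!
Write `ρ = s₁/s₀`, so that `σ₁ = ρ² σ₀`. The quotient rule gives
`σ₁ ∇(v/ρ) = σ₁ ρ⁻² (ρ ∇v - v ∇ρ) = ρ (σ₀ ∇v) - v (σ₀ ∇ρ)`, and the product rule for the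
divergence turns this into
`div(σ₁ ∇(v/ρ)) = ρ div(σ₀ ∇v) - v div(σ₀ ∇ρ) + ⟪∇ρ, σ₀ ∇v⟫ - ⟪∇v, σ₀ ∇ρ⟫`,
whose last two terms cancel. Dividing by `-ρ` gives the identity.
-/

open InnerProductSpace Filter Topology
open scoped Gradient

section Gradient

variable {F : Type*} [NormedAddCommGroup F] [InnerProductSpace ℝ F] [CompleteSpace F]
  {f g : F → ℝ} {f' g' x : F}

theorem HasGradientAt.mul (hf : HasGradientAt f f' x) (hg : HasGradientAt g g' x) :
    HasGradientAt (fun y => f y * g y) (f x • g' + g x • f') x := by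
  rw [hasGradientAt_iff_hasFDerivAt] at *
  simpa using hf.fun_mul hg

theorem HasGradientAt.inv (hg : HasGradientAt g g' x) (hx : g x ≠ 0) :
    HasGradientAt (fun y => (g y)⁻¹) (-(g x ^ 2)⁻¹ • g') x := by
  rw [hasGradientAt_iff_hasFDerivAt] at *
  simpa [Function.comp_def] using (hasDerivAt_inv hx).comp_hasFDerivAt x hg

theorem HasGradientAt.div (hf : HasGradientAt f f' x) (hg : HasGradientAt g g' x)
    (hx : g x ≠ 0) :
    HasGradientAt (fun y => f y / g y) ((g x ^ 2)⁻¹ • (g x • f' - f x • g')) x := by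
  convert hf.mul (hg.inv hx) using 1
  · simp only [div_eq_mul_inv]
  · match_scalars <;> field_simp

theorem ContDiffAt.differentiableAt_gradient {n : WithTop ℕ∞} (hf : ContDiffAt ℝ n f x)
    (hn : 2 ≤ n) : DifferentiableAt ℝ (∇ f) x := by
  have hdf : DifferentiableAt ℝ (fderiv ℝ f) x :=
    (hf.fderiv_right (m := 1) hn).differentiableAt one_ne_zero
  exact (toDual ℝ F).symm.toContinuousLinearEquiv.differentiableAt.comp x hdf

end Gradient

theorem EuclideanSpace.gradient_apply {ι : Type*} [Fintype ι] [DecidableEq ι]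
    (f : EuclideanSpace ℝ ι → ℝ) (x : EuclideanSpace ℝ ι) (i : ι) :
    ∇ f x i = fderiv ℝ f x (EuclideanSpace.single i 1) := by
  rw [← inner_gradient_left, EuclideanSpace.inner_single_right]
  simp

section Divergence

variable {F G : EuclideanSpace ℝ (Fin 2) → EuclideanSpace ℝ (Fin 2)}
  {f : EuclideanSpace ℝ (Fin 2) → ℝ} {x : EuclideanSpace ℝ (Fin 2)}

theorem Filter.EventuallyEq.diverg_eq (h : F =ᶠ[𝓝 x] G) : diverg F x = diverg G x := by
  simp only [diverg, h.fderiv_eq]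

theorem diverg_fun_sub (hF : DifferentiableAt ℝ F x) (hG : DifferentiableAt ℝ G x) :
    diverg (fun y => F y - G y) x = diverg F x - diverg G x := by
  simp [diverg, fderiv_fun_sub hF hG, Finset.sum_sub_distrib]

theorem diverg_fun_smul (hf : DifferentiableAt ℝ f x) (hG : DifferentiableAt ℝ G x) :
    diverg (fun y => f y • G y) x = ⟪∇ f x, G x⟫_ℝ + f x * diverg G x := by
  simp only [diverg, fderiv_fun_smul hf hG, add_apply, smul_apply,
    ContinuousLinearMap.smulRight_apply, PiLp.add_apply, PiLp.smul_apply, smul_eq_mul,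
    Fin.sum_univ_two, PiLp.inner_apply, EuclideanSpace.gradient_apply, RCLike.inner_apply,
    conj_trivial]
  ring

end Divergence

theorem diverg_smul_gradient_div_eq {σ₀ σ₁ ρ v : EuclideanSpace ℝ (Fin 2) → ℝ}
    {x : EuclideanSpace ℝ (Fin 2)} (hσ : σ₁ =ᶠ[𝓝 x] fun y => ρ y ^ 2 * σ₀ y)
    (hσ₀ : DifferentiableAt ℝ σ₀ x) (hρ : ContDiffAt ℝ 2 ρ x) (hv : ContDiffAt ℝ 2 v x)
    (hρx : ρ x ≠ 0) :
    diverg (fun y => σ₁ y • ∇ (fun z => v z / ρ z) y) x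
      = ρ x * diverg (fun y => σ₀ y • ∇ v y) x - v x * diverg (fun y => σ₀ y • ∇ ρ y) x := by
  have hfield : (fun y => σ₁ y • ∇ (fun z => v z / ρ z) y)
      =ᶠ[𝓝 x] fun y => ρ y • (σ₀ y • ∇ v y) - v y • (σ₀ y • ∇ ρ y) := by
    filter_upwards [hσ, hρ.eventually (by simp), hv.eventually (by simp),
      hρ.continuousAt.eventually_ne hρx] with y hσy hρy hvy hρy₀
    rw [hσy, ((hvy.differentiableAt two_ne_zero).hasGradientAt.div
      (hρy.differentiableAt two_ne_zero).hasGradientAt hρy₀).gradient]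
    match_scalars <;> field_simp
  have hvx := hv.differentiableAt two_ne_zero
  have hρx' := hρ.differentiableAt two_ne_zero
  have hG := hσ₀.fun_smul (hv.differentiableAt_gradient le_rfl)
  have hH := hσ₀.fun_smul (hρ.differentiableAt_gradient le_rfl)
  rw [hfield.diverg_eq, diverg_fun_sub (hρx'.fun_smul hG) (hvx.fun_smul hH),
    diverg_fun_smul hρx' hG, diverg_fun_smul hvx hH, inner_smul_right, inner_smul_right,
    real_inner_comm]
  ring

/-- Continuum generalized Liouville identity (equations (eq:glv)–(eq:glv:q)), written
with `sᵢ = σᵢ^{1/2}`: with `σ₀ = s₀²`, `σ₁ = s₁²` and `ρ = s₁/s₀`, for all `x ∈ Ω`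
`(1/ρ)(−div(σ₁ ∇(v/ρ))) = −div(σ₀ ∇v) + q v` with `q = div(σ₀ ∇ρ)/ρ`;
i.e. `L_{σ₁,0}` and `L_{σ₀,q}` are Liouville congruent via `(σ₁/σ₀)^{-1/2}`. -/
theorem continuum_generalized_liouville_identity
    (Ω : Set (EuclideanSpace ℝ (Fin 2))) (hΩ : IsOpen Ω)
    (s₀ s₁ v : EuclideanSpace ℝ (Fin 2) → ℝ)
    (hs₀ : ContDiffOn ℝ 2 s₀ Ω) (hs₁ : ContDiffOn ℝ 2 s₁ Ω)
    (hv : ContDiffOn ℝ 2 v Ω)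
    (hs₀pos : ∀ x ∈ Ω, 0 < s₀ x) (hs₁pos : ∀ x ∈ Ω, 0 < s₁ x) :
    ∀ x ∈ Ω,
      (1 / (s₁ x / s₀ x)) *
          (-(diverg (fun y => (s₁ y) ^ 2 •
              gradient (fun z => v z / (s₁ z / s₀ z)) y) x))
        = -(diverg (fun y => (s₀ y) ^ 2 • gradient v y) x)
          + (diverg (fun y => (s₀ y) ^ 2 •
              gradient (fun z => s₁ z / s₀ z) y) x / (s₁ x / s₀ x)) * v x := by
  intro x hx
  have hΩx : Ω ∈ 𝓝 x := hΩ.mem_nhds hx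
  have hs₀x := hs₀.contDiffAt hΩx
  have hs₀x₀ : s₀ x ≠ 0 := (hs₀pos x hx).ne'
  have hs₁x₀ : s₁ x ≠ 0 := (hs₁pos x hx).ne'
  have hσ : (fun y => s₁ y ^ 2) =ᶠ[𝓝 x] fun y => (s₁ y / s₀ y) ^ 2 * s₀ y ^ 2 := by
    filter_upwards [hΩx] with y hy
    field_simp [(hs₀pos y hy).ne']
  rw [diverg_smul_gradient_div_eq hσ ((hs₀x.differentiableAt two_ne_zero).pow 2)
    ((hs₁.contDiffAt hΩx).div hs₀x hs₀x₀) (hv.contDiffAt hΩx) (div_ne_zero hs₁x₀ hs₀x₀)]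
  field_simp
  ring
end
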